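/- Let L and M be FDD-lattices and f : L → M a bounded lattice homomorphism. Then the map pt(f) : pt(M) → pt(L) defined by pt(f)(p) = p ∘ f is a spectral map between the Lawson compact algebraic L-domains pt(M) and pt(L): for every compact-open subset U of pt(L) (with the Scott topology), pt(f)⁻¹(U) is a compact-open subset of pt(M). -/

import Mathlib

section Domains

variable (P : Type*) [PartialOrder P]

/-- A dcpo: every nonempty directed subset has a least upper bound. -/
def DirectedComplete : Prop :=
  ∀ D : Set P, D.Nonempty → DirectedOn (· ≤ ·) D → ∃ s, IsLUB D s

variable {P}

/-- A compact (finite) element of a poset. -/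
def IsCompactElt (k : P) : Prop :=
  ∀ D : Set P, D.Nonempty → DirectedOn (· ≤ ·) D → ∀ s : P, IsLUB D s → k ≤ s →
    ∃ d ∈ D, k ≤ d

/-- A Scott-open subset: an upper set inaccessible by directed suprema. -/
def ScottOpen (U : Set P) : Prop :=
  IsUpperSet U ∧ ∀ D : Set P, D.Nonempty → DirectedOn (· ≤ ·) D → ∀ s : P, IsLUB D s →
    s ∈ U → (D ∩ U).Nonempty

/-- Compactness of a set with respect to covers by Scott-open sets. -/
def ScottCompactSet (K : Set P) : Prop :=
  ∀ C : Set (Set P), (∀ V ∈ C, ScottOpen V) → K ⊆ ⋃₀ C →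
    ∃ F : Finset (Set P), ↑F ⊆ C ∧ K ⊆ ⋃₀ (F : Set (Set P))

variable (P)

/-- The collection of compact-open subsets (w.r.t. the Scott topology). -/
def CO : Set (Set P) := {U | ScottOpen U ∧ ScottCompactSet U}

/-- An algebraic domain: a dcpo in which, for every `x`, the set of compact elements
below `x` is a (nonempty) directed set with least upper bound `x`. -/
def IsAlgebraicDomain : Prop :=
  DirectedComplete P ∧
  ∀ x : P,
    (Set.Iic x ∩ {k | IsCompactElt k}).Nonempty ∧
    DirectedOn (· ≤ ·) (Set.Iic x ∩ {k | IsCompactElt k}) ∧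
    IsLUB (Set.Iic x ∩ {k | IsCompactElt k}) x

/-- Every principal ideal `↓x` is a complete lattice in the induced order
(equivalently: every subset of `↓x` has a least upper bound inside `↓x`). -/
def PrincipalIdealsComplete : Prop :=
  ∀ x : P, ∀ S : Set P, S ⊆ Set.Iic x →
    ∃ s, s ≤ x ∧ (∀ a ∈ S, a ≤ s) ∧ ∀ u, u ≤ x → (∀ a ∈ S, a ≤ u) → s ≤ u

/-- An algebraic L-domain. -/
def IsAlgebraicLDomain : Prop := IsAlgebraicDomain P ∧ PrincipalIdealsComplete P

/-- The Lawson topology: generated by the Scott-open sets together with complements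
of principal filters. -/
def lawsonTopology : TopologicalSpace P :=
  TopologicalSpace.generateFrom ({U | ScottOpen U} ∪ {U | ∃ x : P, U = (Set.Ici x)ᶜ})

/-- Lawson compactness: compactness in the Lawson topology. -/
def LawsonCompact : Prop := @CompactSpace P (lawsonTopology P)

end Domains

section FDD

variable {L : Type*} [Lattice L] [BoundedOrder L]

/-- A nonzero co-prime element. -/
def CoprimeElt (a : L) : Prop :=
  a ≠ ⊥ ∧ ∀ x y : L, a ≤ x ⊔ y → a ≤ x ∨ a ≤ y

/-- A finitely disjunctive distributive lattice (FDD-lattice): a bounded distributive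
lattice in which (1) every element is a finite join of nonzero co-primes, and
(2) the meet of two nonzero co-primes is a finite join of pairwise disjoint
nonzero co-primes. -/
def IsFDD (L : Type*) [DistribLattice L] [BoundedOrder L] : Prop :=
  (∀ x : L, ∃ F : Finset L, (∀ a ∈ F, CoprimeElt a) ∧ x = F.sup id) ∧
  (∀ a b : L, CoprimeElt a → CoprimeElt b →
    ∃ F : Finset L, (∀ c ∈ F, CoprimeElt c) ∧
      (∀ c ∈ F, ∀ d ∈ F, c ≠ d → c ⊓ d = ⊥) ∧ a ⊓ b = F.sup id)

/-- A point of a bounded lattice: a lattice homomorphism into the two-element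
bounded lattice `Bool` preserving `0`, `1`, binary meets and binary joins. -/
def IsPoint (p : L → Bool) : Prop :=
  p ⊥ = false ∧ p ⊤ = true ∧
  (∀ x y : L, p (x ⊓ y) = (p x && p y)) ∧
  (∀ x y : L, p (x ⊔ y) = (p x || p y))

end FDD

/-- The poset of points of a bounded lattice, with the pointwise order. -/
def Pt (L : Type*) [Lattice L] [BoundedOrder L] : Type _ :=
  {p : L → Bool // IsPoint p}

noncomputable instance (L : Type*) [Lattice L] [BoundedOrder L] : PartialOrder (Pt L) :=
  inferInstanceAs (PartialOrder {p : L → Bool // IsPoint p})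

/-- `γ_a : L → {0,1}`, `γ_a x = 1` iff `a ≤ x`. -/
noncomputable def gammaPt {L : Type*} [Lattice L] [BoundedOrder L] (a : L) : L → Bool :=
  fun x => @decide (a ≤ x) (Classical.propDecidable _)

/-- A bounded lattice homomorphism. -/
def IsBLH {L M : Type*} [Lattice L] [BoundedOrder L] [Lattice M] [BoundedOrder M]
    (f : L → M) : Prop :=
  f ⊥ = ⊥ ∧ f ⊤ = ⊤ ∧ (∀ x y, f (x ⊓ y) = f x ⊓ f y) ∧ (∀ x y, f (x ⊔ y) = f x ⊔ f y)

/-!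
Directed suprema of points are computed pointwise, so each `Φ a = {p | p a = true}`
(`Pt.basicOpen a`) is Scott-open; if `a = b₁ ⊔ ⋯ ⊔ bₙ` with co-prime `bᵢ`, then `Φ a` is the
union of the principal filters of the points `γ_{bᵢ}`, hence Scott-compact. In an FDD-lattice
every point `p` is the directed supremum of the `γ_a` with `a` co-prime and `p a = true`
(directedness is the second FDD axiom), so a compact-open set is a finite union of sets `Φ a`.
Since `pt(f)⁻¹(Φ a) = Φ (f a)`, its preimage is again such a finite union.
-/

section Scott

variable {P : Type*} [PartialOrder P]

lemma scottOpen_biUnion {ι : Type*} (T : Set ι) {S : ι → Set P}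
    (h : ∀ i ∈ T, ScottOpen (S i)) : ScottOpen (⋃ i ∈ T, S i) := by
  refine ⟨isUpperSet_iUnion₂ fun i hi => (h i hi).1, fun D hne hdir s hs hsU => ?_⟩
  obtain ⟨i, hi, hsi⟩ := Set.mem_iUnion₂.mp hsU
  obtain ⟨d, hd, hdi⟩ := (h i hi).2 D hne hdir s hs hsi
  exact ⟨d, hd, Set.mem_iUnion₂.mpr ⟨i, hi, hdi⟩⟩

lemma scottCompactSet_Ici (p : P) : ScottCompactSet (Set.Ici p) := by
  intro C hC hcov
  obtain ⟨V, hV, hpV⟩ := hcov (Set.mem_Ici.mpr le_rfl)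
  exact ⟨{V}, by simpa using hV, fun q hq => ⟨V, by simp, (hC V hV).1 hq hpV⟩⟩

lemma scottCompactSet_biUnion {ι : Type*} (F : Finset ι) {S : ι → Set P}
    (h : ∀ i ∈ F, ScottCompactSet (S i)) : ScottCompactSet (⋃ i ∈ F, S i) := by
  classical
  intro C hC hcov
  choose G hGC hSG using fun i hi =>
    h i hi C hC fun x hx => hcov (Set.mem_biUnion hi hx)
  refine ⟨F.attach.biUnion fun i => G i.1 i.2, ?_, ?_⟩
  · simpa using fun i hi => hGC i hi
  · intro x hx
    obtain ⟨i, hi, hxi⟩ := Set.mem_iUnion₂.mp hx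
    obtain ⟨V, hV, hxV⟩ := hSG i hi hxi
    exact ⟨V, by simpa using ⟨i, hi, hV⟩, hxV⟩

lemma ScottCompactSet.exists_finset_subcover {K : Set P} (hK : ScottCompactSet K) {ι : Type*}
    (V : ι → Set P) (hV : ∀ i, ScottOpen (V i)) (hcov : K ⊆ ⋃ i, V i) :
    ∃ t : Finset ι, K ⊆ ⋃ i ∈ t, V i := by
  classical
  obtain ⟨F, hFV, hKF⟩ := hK (Set.range V) (Set.forall_mem_range.mpr hV)
    (Set.sUnion_range V ▸ hcov)
  obtain ⟨t, -, rfl⟩ := Finset.subset_set_image_iff.mp (Set.image_univ.symm ▸ hFV)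
  exact ⟨t, by simpa [Set.sUnion_image] using hKF⟩

end Scott

section Points

variable {L : Type*} [Lattice L] [BoundedOrder L]

def IsJoinOfCoprimes (x : L) : Prop :=
  ∃ F : Finset L, (∀ a ∈ F, CoprimeElt a) ∧ x = F.sup id

lemma isPoint_iff {p : L → Bool} :
    IsPoint p ↔ p ⊥ = false ∧ p ⊤ = true ∧
      (∀ x y, p (x ⊓ y) = true ↔ p x = true ∧ p y = true) ∧
      (∀ x y, p (x ⊔ y) = true ↔ p x = true ∨ p y = true) := by
  simp only [IsPoint, Bool.eq_iff_iff (b := _ && _), Bool.eq_iff_iff (b := _ || _),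
    Bool.and_eq_true, Bool.or_eq_true]

lemma IsPoint.comp {M : Type*} [Lattice M] [BoundedOrder M] {p : M → Bool} (hp : IsPoint p)
    {f : L → M} (hf : IsBLH f) : IsPoint (p ∘ f) := by
  obtain ⟨hp₀, hp₁, hp_inf, hp_sup⟩ := hp
  obtain ⟨hf₀, hf₁, hf_inf, hf_sup⟩ := hf
  exact ⟨by simp [hf₀, hp₀], by simp [hf₁, hp₁], by simp [hf_inf, hp_inf],
    by simp [hf_sup, hp_sup]⟩

lemma isPoint_gammaPt {a : L} (ha : CoprimeElt a) : IsPoint (gammaPt a) := by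
  simp only [isPoint_iff, gammaPt, decide_eq_true_iff, decide_eq_false_iff_not, le_bot_iff]
  exact ⟨ha.1, le_top, fun _ _ => le_inf_iff,
    fun x y => ⟨ha.2 x y, fun h => h.elim le_sup_of_le_left le_sup_of_le_right⟩⟩

namespace Pt

lemma le_iff {p q : Pt L} : p ≤ q ↔ ∀ x, p.1 x = true → q.1 x = true :=
  forall_congr' fun _ => Bool.le_iff_imp

lemma map_inf (p : Pt L) (x y : L) : p.1 (x ⊓ y) = true ↔ p.1 x = true ∧ p.1 y = true :=
  (isPoint_iff.mp p.2).2.2.1 x y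

lemma map_sup (p : Pt L) (x y : L) : p.1 (x ⊔ y) = true ↔ p.1 x = true ∨ p.1 y = true :=
  (isPoint_iff.mp p.2).2.2.2 x y

lemma mono (p : Pt L) {x y : L} (h : x ≤ y) (hx : p.1 x = true) : p.1 y = true := by
  rw [← inf_eq_left.mpr h, map_inf] at hx
  exact hx.2

lemma map_finset_sup (p : Pt L) (F : Finset L) :
    p.1 (F.sup id) = true ↔ ∃ b ∈ F, p.1 b = true := by
  classical
  induction F using Finset.induction_on with
  | empty => simp [p.2.1]
  | insert a F _ ih => simp [Finset.sup_insert, map_sup, ih]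

noncomputable def principal {a : L} (ha : CoprimeElt a) : Pt L := ⟨gammaPt a, isPoint_gammaPt ha⟩

lemma principal_apply {a : L} (ha : CoprimeElt a) (x : L) :
    (principal ha).1 x = true ↔ a ≤ x := by
  simp [principal, gammaPt]

lemma principal_le_iff {a : L} (ha : CoprimeElt a) {q : Pt L} :
    principal ha ≤ q ↔ q.1 a = true := by
  refine le_iff.trans ⟨fun h => h a ((principal_apply ha a).mpr le_rfl), fun h x hx => ?_⟩
  exact q.mono ((principal_apply ha x).mp hx) h

def basicOpen (a : L) : Set (Pt L) := {p | p.1 a = true}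

lemma basicOpen_eq_Ici {a : L} (ha : CoprimeElt a) : basicOpen a = Set.Ici (principal ha) :=
  Set.ext fun _ => (principal_le_iff ha).symm

open Classical in
lemma isPoint_directedSup {D : Set (Pt L)} (hne : D.Nonempty) (hdir : DirectedOn (· ≤ ·) D) :
    IsPoint fun x => decide (∃ p ∈ D, p.1 x = true) := by
  simp only [isPoint_iff, decide_eq_true_iff, decide_eq_false_iff_not, map_sup]
  refine ⟨fun ⟨p, _, hp⟩ => by simp [p.2.1] at hp, hne.imp fun p hp => ⟨hp, p.2.2.1⟩,
    fun x y => ⟨?_, ?_⟩, fun x y => by simp only [← exists_or, ← and_or_left]⟩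
  · rintro ⟨p, hp, hxy⟩
    rw [map_inf] at hxy
    exact ⟨⟨p, hp, hxy.1⟩, ⟨p, hp, hxy.2⟩⟩
  · rintro ⟨⟨p, hp, hx⟩, ⟨q, hq, hy⟩⟩
    obtain ⟨r, hr, hpr, hqr⟩ := hdir p hp q hq
    exact ⟨r, hr, (map_inf r x y).mpr ⟨le_iff.mp hpr x hx, le_iff.mp hqr y hy⟩⟩

open Classical in
lemma exists_mem_of_isLUB {D : Set (Pt L)} (hne : D.Nonempty) (hdir : DirectedOn (· ≤ ·) D)
    {s : Pt L} (hs : IsLUB D s) {x : L} (hx : s.1 x = true) : ∃ p ∈ D, p.1 x = true := by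
  let q : Pt L := ⟨_, isPoint_directedSup hne hdir⟩
  have hsq : s ≤ q := hs.2 fun p hp => le_iff.mpr fun y hy => decide_eq_true ⟨p, hp, hy⟩
  exact of_decide_eq_true (le_iff.mp hsq x hx)

lemma scottOpen_basicOpen (a : L) : ScottOpen (basicOpen a) :=
  ⟨fun _ _ hpq hp => le_iff.mp hpq a hp,
    fun _ hne hdir _ hs ha => exists_mem_of_isLUB hne hdir hs ha⟩

lemma basicOpen_finset_sup (F : Finset L) : basicOpen (F.sup id) = ⋃ b ∈ F, basicOpen b :=
  Set.ext fun p => by simp [basicOpen, map_finset_sup]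

lemma scottCompactSet_basicOpen {a : L} (ha : IsJoinOfCoprimes a) :
    ScottCompactSet (basicOpen a) := by
  obtain ⟨F, hF, rfl⟩ := ha
  rw [basicOpen_finset_sup]
  exact scottCompactSet_biUnion F fun b hb => basicOpen_eq_Ici (hF b hb) ▸ scottCompactSet_Ici _

lemma exists_coprime_le {x : L} (hx : IsJoinOfCoprimes x) {p : Pt L} (hpx : p.1 x = true) :
    ∃ b, CoprimeElt b ∧ b ≤ x ∧ p.1 b = true := by
  obtain ⟨F, hF, rfl⟩ := hx
  obtain ⟨b, hb, hpb⟩ := (map_finset_sup p F).mp hpx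
  exact ⟨b, hF b hb, Finset.le_sup (f := id) hb, hpb⟩

lemma principal_le_principal_iff {a b : L} (ha : CoprimeElt a) (hb : CoprimeElt b) :
    principal ha ≤ principal hb ↔ b ≤ a := by
  rw [principal_le_iff, principal_apply]

noncomputable def principalBelow (p : Pt L) :
    {a : L // CoprimeElt a ∧ p.1 a = true} → Pt L :=
  fun a => principal a.2.1

lemma isLUB_range_principalBelow (hJ : ∀ x : L, IsJoinOfCoprimes x) (p : Pt L) :
    IsLUB (Set.range (principalBelow p)) p := by
  refine ⟨Set.forall_mem_range.mpr fun a => (principal_le_iff a.2.1).mpr a.2.2,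
    fun u hu => le_iff.mpr fun x hpx => ?_⟩
  obtain ⟨b, hb, hbx, hpb⟩ := exists_coprime_le (hJ x) hpx
  exact u.mono hbx ((principal_le_iff hb).mp (hu ⟨⟨b, hb, hpb⟩, rfl⟩))

end Pt

end Points

section FDD

variable {L : Type*} [DistribLattice L] [BoundedOrder L]

namespace Pt

lemma directed_principalBelow (hL : IsFDD L) (p : Pt L) :
    Directed (· ≤ ·) (principalBelow p) := by
  rintro ⟨a, ha, hpa⟩ ⟨b, hb, hpb⟩
  obtain ⟨G, hG, -, hab⟩ := hL.2 a b ha hb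
  obtain ⟨c, hc, hcab, hpc⟩ := exists_coprime_le ⟨G, hG, hab⟩ ((map_inf p a b).mpr ⟨hpa, hpb⟩)
  exact ⟨⟨c, hc, hpc⟩, (principal_le_principal_iff ha hc).mpr (hcab.trans inf_le_left),
    (principal_le_principal_iff hb hc).mpr (hcab.trans inf_le_right)⟩

lemma exists_basicOpen_subset (hL : IsFDD L) {U : Set (Pt L)} (hU : ScottOpen U) {p : Pt L}
    (hp : p ∈ U) : ∃ a, p.1 a = true ∧ basicOpen a ⊆ U := by
  have hne : (Set.range (principalBelow p)).Nonempty := by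
    obtain ⟨b, hb, -, hpb⟩ := exists_coprime_le (hL.1 ⊤) p.2.2.1
    exact ⟨_, ⟨b, hb, hpb⟩, rfl⟩
  obtain ⟨-, ⟨⟨a, ha, hpa⟩, rfl⟩, haU⟩ := hU.2 _ hne
    (directedOn_range.mpr (directed_principalBelow hL p)) p
    (isLUB_range_principalBelow hL.1 p) hp
  exact ⟨a, hpa, basicOpen_eq_Ici ha ▸ fun q hq => hU.1 hq (haU : principal ha ∈ U)⟩

lemma exists_finset_eq_biUnion_basicOpen (hL : IsFDD L) {U : Set (Pt L)} (hU : U ∈ CO (Pt L)) :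
    ∃ A : Finset L, U = ⋃ a ∈ A, basicOpen a := by
  classical
  obtain ⟨t, ht⟩ := hU.2.exists_finset_subcover
    (fun a : {a : L // basicOpen a ⊆ U} => basicOpen a.1) (fun a => scottOpen_basicOpen a.1)
    fun p hp =>
      let ⟨a, hpa, haU⟩ := exists_basicOpen_subset hL hU.1 hp
      Set.mem_iUnion.mpr ⟨⟨a, haU⟩, hpa⟩
  refine ⟨t.image Subtype.val, ?_⟩
  rw [Finset.set_biUnion_finset_image]
  exact ht.antisymm (Set.iUnion₂_subset fun a _ => a.2)

end Pt

end FDD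

/-- For a bounded lattice homomorphism `f : L → M` between FDD-lattices,
`pt f : Pt M → Pt L`, `p ↦ p ∘ f`, is a well-defined spectral map between the Lawson
compact algebraic L-domains `Pt M` and `Pt L`: preimages of compact-open subsets are
compact-open. -/
theorem stmt16 {L M : Type*} [DistribLattice L] [BoundedOrder L]
    [DistribLattice M] [BoundedOrder M]
    (hL : IsFDD L) (hM : IsFDD M) (f : L → M) (hf : IsBLH f) :
    (∀ p : Pt M, IsPoint (p.1 ∘ f)) ∧
    (∀ g : Pt M → Pt L, (∀ p : Pt M, (g p).1 = p.1 ∘ f) →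
      ∀ U ∈ CO (Pt L), g ⁻¹' U ∈ CO (Pt M)) := by
  refine ⟨fun p => p.2.comp hf, fun g hg U hU => ?_⟩
  obtain ⟨A, rfl⟩ := Pt.exists_finset_eq_biUnion_basicOpen hL hU
  have hpre : ∀ a, g ⁻¹' Pt.basicOpen a = Pt.basicOpen (f a) := fun a =>
    Set.ext fun p => by simp [Pt.basicOpen, hg]
  simp only [Set.preimage_iUnion₂, hpre]
  exact ⟨scottOpen_biUnion _ fun a _ => Pt.scottOpen_basicOpen (f a),
    scottCompactSet_biUnion A fun a _ => Pt.scottCompactSet_basicOpen (hM.1 (f a))⟩
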